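/- Let \varphi: \mathbb{C}^n \to \mathbb{R} be C^2, \eta \in \mathbb{R}, \epsilon > 0, and define \Psi(z) = \eta^2 |\nabla \varphi(z)|^2 + (1+\epsilon)\eta \Delta\varphi(z). Then for every f \in C_0^\infty(\mathbb{C}^n), \int \Psi |f|^2 e^{-\varphi} d\lambda \le (2 + \epsilon + 1/\epsilon) \sum_{j=1}^n (||X_j f||_\varphi^2 + ||Y_j f||_\varphi^2), where X_j = \partial/\partial x_j - ((1+\eta)/2) \partial\varphi/\partial x_j and Y_j = \partial/\partial y_j - ((1+\eta)/2) \partial\varphi/\partial y_j. -/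

import Mathlib

noncomputable section

open MeasureTheory

/-- Second directional derivative along `v` twice. -/
def D2 {m : ℕ} (φ : EuclideanSpace ℝ (Fin m) → ℝ) (x v : EuclideanSpace ℝ (Fin m)) : ℝ :=
  fderiv ℝ (fun y => fderiv ℝ φ y v) x v

/-- The direction `∂/∂x_j` in `ℂⁿ ≅ ℝ^{2n}` (coordinates `x_1,…,x_n,y_1,…,y_n`). -/
def exR {n : ℕ} (j : Fin n) : EuclideanSpace ℝ (Fin (2 * n)) :=
  EuclideanSpace.single ⟨j.1, by have := j.2; omega⟩ 1

/-- The direction `∂/∂y_j`. -/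
def eyR {n : ℕ} (j : Fin n) : EuclideanSpace ℝ (Fin (2 * n)) :=
  EuclideanSpace.single ⟨n + j.1, by have := j.2; omega⟩ 1

/-- `|∇φ(z)|²`. -/
def gradSq {n : ℕ} (φ : EuclideanSpace ℝ (Fin (2 * n)) → ℝ)
    (z : EuclideanSpace ℝ (Fin (2 * n))) : ℝ :=
  ∑ j : Fin n, ((fderiv ℝ φ z (exR j)) ^ 2 + (fderiv ℝ φ z (eyR j)) ^ 2)

/-- The Laplacian `Δφ`. -/
def lap {n : ℕ} (φ : EuclideanSpace ℝ (Fin (2 * n)) → ℝ)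
    (z : EuclideanSpace ℝ (Fin (2 * n))) : ℝ :=
  ∑ j : Fin n, (D2 φ z (exR j) + D2 φ z (eyR j))

/-- The vector field `∂_v - ((1+η)/2)(∂_v φ)`. -/
def Xder {m : ℕ} (η : ℝ) (φ : EuclideanSpace ℝ (Fin m) → ℝ) (v : EuclideanSpace ℝ (Fin m))
    (f : EuclideanSpace ℝ (Fin m) → ℂ) : EuclideanSpace ℝ (Fin m) → ℂ :=
  fun x => fderiv ℝ f x v - (((1 + η) / 2 * fderiv ℝ φ x v : ℝ) : ℂ) * f x

lemma integral_fderiv_apply_eq_zero {m : ℕ} {G : EuclideanSpace ℝ (Fin m) → ℝ}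
    (hG : ContDiff ℝ 1 G) (hGc : HasCompactSupport G) (v : EuclideanSpace ℝ (Fin m)) :
    ∫ x, fderiv ℝ G x v = 0 := by
  obtain ⟨C, hC⟩ := hG.lipschitzWith_of_hasCompactSupport hGc one_ne_zero
  have h := LipschitzWith.integral_lineDeriv_mul_eq (μ := volume)
    (LipschitzWith.const (b := (1:ℝ))) hC hGc v
  have h1 : ∀ x : EuclideanSpace ℝ (Fin m), lineDeriv ℝ (fun _ => (1:ℝ)) x v = 0 := by
    intro x; simp [lineDeriv]
  have h2 : ∀ x : EuclideanSpace ℝ (Fin m), lineDeriv ℝ G x (-v) = -(fderiv ℝ G x v) := by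
    intro x
    rw [(hG.differentiable one_ne_zero x).lineDeriv_eq_fderiv]
    simp
  simp only [h1, h2, zero_mul, integral_zero, mul_one] at h
  rw [integral_neg] at h
  linarith

lemma pointwise_ineq (ε η c u w du dw : ℝ) (hε : 0 < ε) :
    η^2*c^2*(u^2+w^2) + (1+ε)*η*(c^2*(u^2+w^2) - c*(2*(u*du+w*dw)))
      ≤ (2+ε+1/ε) * ((du - (1+η)/2*c*u)^2 + (dw - (1+η)/2*c*w)^2) := by
  set P1 := du - (1+η)/2*c*u with hP1
  set P2 := dw - (1+η)/2*c*w with hP2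
  set Q1 := -du + (1-η)/2*c*u with hQ1
  set Q2 := -dw + (1-η)/2*c*w with hQ2
  have e1 : η^2*c^2*(u^2+w^2) = (P1+Q1)^2 + (P2+Q2)^2 := by
    rw [hP1, hP2, hQ1, hQ2]; ring
  have e2 : (1+ε)*η*(c^2*(u^2+w^2) - c*(2*(u*du+w*dw)))
      = (1+ε)*((P1^2+P2^2) - (Q1^2+Q2^2)) := by
    rw [hP1, hP2, hQ1, hQ2]; ring
  have key : ∀ P Q : ℝ, (P+Q)^2 ≤ (1+1/ε)*P^2 + (1+ε)*Q^2 := by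
    intro P Q
    have h : (1+1/ε)*P^2 + (1+ε)*Q^2 - (P+Q)^2 = (P-ε*Q)^2/ε := by
      field_simp; ring
    nlinarith [div_nonneg (sq_nonneg (P-ε*Q)) hε.le]
  rw [e1, e2]
  nlinarith [key P1 Q1, key P2 Q2]

lemma key_dir {m : ℕ} (η ε : ℝ) (hε : 0 < ε)
    (φ : EuclideanSpace ℝ (Fin m) → ℝ) (hφ : ContDiff ℝ 2 φ)
    (f : EuclideanSpace ℝ (Fin m) → ℂ)
    (hf : ContDiff ℝ (⊤ : ℕ∞) f) (hcs : HasCompactSupport f)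
    (e : EuclideanSpace ℝ (Fin m)) :
    ∫ x, (η^2 * (fderiv ℝ φ x e)^2 + (1+ε)*η* D2 φ x e) * ‖f x‖^2 * Real.exp (-φ x)
      ≤ (2+ε+1/ε) * ∫ x, ‖Xder η φ e f x‖^2 * Real.exp (-φ x) := by
  have hφ1 : Differentiable ℝ φ := hφ.differentiable two_ne_zero
  have hf1 : Differentiable ℝ f := hf.differentiable (by simp)
  -- basic functions
  set u : EuclideanSpace ℝ (Fin m) → ℝ := fun x => (f x).re with hu_def
  set w : EuclideanSpace ℝ (Fin m) → ℝ := fun x => (f x).im with hw_def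
  set N : EuclideanSpace ℝ (Fin m) → ℝ := fun x => u x * u x + w x * w x with hN_def
  set φe : EuclideanSpace ℝ (Fin m) → ℝ := fun y => fderiv ℝ φ y e with hφe_def
  set du : EuclideanSpace ℝ (Fin m) → ℝ := fun x => (fderiv ℝ f x e).re with hdu_def
  set dw : EuclideanSpace ℝ (Fin m) → ℝ := fun x => (fderiv ℝ f x e).im with hdw_def
  have hNf : ∀ x, ‖f x‖^2 = N x := by
    intro x
    rw [hN_def]
    simp only [hu_def, hw_def]
    rw [Complex.sq_norm, Complex.normSq_apply]
  -- smoothness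
  have hφe1 : ContDiff ℝ 1 φe := by
    rw [hφe_def]
    exact (hφ.fderiv_right (m := 1) (by norm_num)).clm_apply contDiff_const
  have hu1 : ContDiff ℝ 1 u := Complex.reCLM.contDiff.comp (hf.of_le (by simp))
  have hw1 : ContDiff ℝ 1 w := Complex.imCLM.contDiff.comp (hf.of_le (by simp))
  have hN1 : ContDiff ℝ 1 N := (hu1.mul hu1).add (hw1.mul hw1)
  have hexp1 : ContDiff ℝ 1 (fun y => Real.exp (-φ y)) := (hφ.of_le one_le_two).neg.exp
  -- pointwise derivative facts
  have hfd : ∀ x, HasFDerivAt f (fderiv ℝ f x) x := fun x => (hf1 x).hasFDerivAt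
  have hud : ∀ x, HasFDerivAt u (Complex.reCLM.comp (fderiv ℝ f x)) x := fun x =>
    Complex.reCLM.hasFDerivAt.comp x (hfd x)
  have hwd : ∀ x, HasFDerivAt w (Complex.imCLM.comp (fderiv ℝ f x)) x := fun x =>
    Complex.imCLM.hasFDerivAt.comp x (hfd x)
  have hNd : ∀ x, HasFDerivAt N
      (u x • (Complex.reCLM.comp (fderiv ℝ f x)) + u x • (Complex.reCLM.comp (fderiv ℝ f x))
        + (w x • (Complex.imCLM.comp (fderiv ℝ f x)) + w x • (Complex.imCLM.comp (fderiv ℝ f x)))) x :=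
    fun x => ((hud x).mul (hud x)).add ((hwd x).mul (hwd x))
  have hφed : ∀ x, HasFDerivAt φe (fderiv ℝ φe x) x :=
    fun x => (hφe1.differentiable one_ne_zero x).hasFDerivAt
  have hexpd : ∀ x, HasFDerivAt (fun y => Real.exp (-φ y)) (Real.exp (-φ x) • (-(fderiv ℝ φ x))) x :=
    fun x => ((hφ1 x).hasFDerivAt.neg).exp
  set G : EuclideanSpace ℝ (Fin m) → ℝ := fun x => η * φe x * N x * Real.exp (-φ x) with hG_def
  have hGd : ∀ x, HasFDerivAt G
      ((η * φe x * N x) • (Real.exp (-φ x) • (-(fderiv ℝ φ x)))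
        + Real.exp (-φ x) • ((η * φe x) • (u x • (Complex.reCLM.comp (fderiv ℝ f x)) + u x • (Complex.reCLM.comp (fderiv ℝ f x))
        + (w x • (Complex.imCLM.comp (fderiv ℝ f x)) + w x • (Complex.imCLM.comp (fderiv ℝ f x))))
          + N x • (η • fderiv ℝ φe x))) x :=
    fun x => (((hφed x).const_mul η).mul (hNd x)).mul (hexpd x)
  have hD2 : ∀ x, D2 φ x e = fderiv ℝ φe x e := fun x => by rw [D2, hφe_def]
  have hGfd : ∀ x, fderiv ℝ G x e =
      η * (D2 φ x e * N x + φe x * (2*(u x*du x + w x*dw x)) - φe x * φe x * N x) * Real.exp (-φ x) := by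
    intro x
    rw [(hGd x).fderiv, hD2]
    simp only [ContinuousLinearMap.add_apply, ContinuousLinearMap.coe_smul', Pi.smul_apply,
      ContinuousLinearMap.neg_apply, ContinuousLinearMap.coe_comp', Function.comp_apply,
      Complex.reCLM_apply, Complex.imCLM_apply, smul_eq_mul, hdu_def, hdw_def]
    ring
  -- support facts
  have hsupp : ∀ (g : EuclideanSpace ℝ (Fin m) → ℝ), (∀ x, x ∉ tsupport f → g x = 0) →
      HasCompactSupport g := fun g hg => HasCompactSupport.intro hcs hg
  have hf0 : ∀ x, x ∉ tsupport f → f x = 0 := fun x hx => image_eq_zero_of_notMem_tsupport hx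
  have hDf0 : ∀ x, x ∉ tsupport f → fderiv ℝ f x = 0 := by
    intro x hx
    by_contra h
    exact hx (support_fderiv_subset ℝ (Function.mem_support.2 h))
  have hu0 : ∀ x, x ∉ tsupport f → u x = 0 := fun x hx => by rw [hu_def]; simp [hf0 x hx]
  have hw0 : ∀ x, x ∉ tsupport f → w x = 0 := fun x hx => by rw [hw_def]; simp [hf0 x hx]
  have hN0 : ∀ x, x ∉ tsupport f → N x = 0 := fun x hx => by
    simp only [hN_def]; rw [hu0 x hx, hw0 x hx]; ring
  -- continuity facts
  have hexpc : Continuous (fun y => Real.exp (-φ y)) := hexp1.continuous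
  have hDfec : Continuous fun x => fderiv ℝ f x e := by
    have h : ContDiff ℝ 0 fun x => fderiv ℝ f x e :=
      (hf.fderiv_right (m := 0) (by simp)).clm_apply contDiff_const
    exact h.continuous
  have hduc : Continuous du := by rw [hdu_def]; exact Complex.continuous_re.comp hDfec
  have hdwc : Continuous dw := by rw [hdw_def]; exact Complex.continuous_im.comp hDfec
  have hD2c : Continuous fun x => D2 φ x e := by
    simp only [hD2]
    have h : ContDiff ℝ 0 fun x => fderiv ℝ φe x e :=
      (hφe1.fderiv_right (m := 0) le_rfl).clm_apply contDiff_const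
    exact h.continuous
  have hXderc : Continuous (Xder η φ e f) := by
    show Continuous fun x => fderiv ℝ f x e - (((1 + η) / 2 * fderiv ℝ φ x e : ℝ) : ℂ) * f x
    have hφec : Continuous fun x => fderiv ℝ φ x e := by
      have h : ContDiff ℝ 0 fun x => fderiv ℝ φ x e :=
        (hφ.fderiv_right (m := 0) (by norm_num)).clm_apply contDiff_const
      exact h.continuous
    exact hDfec.sub ((Complex.continuous_ofReal.comp (continuous_const.mul hφec)).mul hf.continuous)
  -- integrability helper
  have hint : ∀ (g : EuclideanSpace ℝ (Fin m) → ℝ), Continuous g →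
      (∀ x, x ∉ tsupport f → g x = 0) → Integrable g :=
    fun g hgc hg0 => hgc.integrable_of_hasCompactSupport (hsupp g hg0)
  -- the four integrands
  set I1 : EuclideanSpace ℝ (Fin m) → ℝ := fun x => η^2 * φe x^2 * N x * Real.exp (-φ x) with hI1_def
  set J2 : EuclideanSpace ℝ (Fin m) → ℝ := fun x => η * D2 φ x e * N x * Real.exp (-φ x) with hJ2_def
  set I3 : EuclideanSpace ℝ (Fin m) → ℝ := fun x =>
    η * (φe x^2 * N x - φe x * (2*(u x*du x + w x*dw x))) * Real.exp (-φ x) with hI3_def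
  set I4 : EuclideanSpace ℝ (Fin m) → ℝ := fun x => ‖Xder η φ e f x‖^2 * Real.exp (-φ x) with hI4_def
  have hI1int : Integrable I1 := by
    apply hint _ (((continuous_const.mul (hφe1.continuous.pow 2)).mul hN1.continuous).mul hexpc)
    intro x hx
    simp only [Pi.mul_apply, Pi.pow_apply, Pi.sub_apply, Pi.add_apply]; rw [hN0 x hx]; ring
  have hJ2int : Integrable J2 := by
    apply hint _ (((continuous_const.mul hD2c).mul hN1.continuous).mul hexpc)
    intro x hx
    simp only [Pi.mul_apply, Pi.pow_apply, Pi.sub_apply, Pi.add_apply]; rw [hN0 x hx]; ring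
  have hI3int : Integrable I3 := by
    apply hint _ ((continuous_const.mul (((hφe1.continuous.pow 2).mul hN1.continuous).sub
      (hφe1.continuous.mul (continuous_const.mul ((hu1.continuous.mul hduc).add
        (hw1.continuous.mul hdwc)))))).mul hexpc)
    intro x hx
    simp only [Pi.mul_apply, Pi.pow_apply, Pi.sub_apply, Pi.add_apply]; rw [hN0 x hx, hu0 x hx, hw0 x hx]; ring
  have hI4int : Integrable I4 := by
    apply hint _ (((hXderc.norm).pow 2).mul hexpc)
    intro x hx
    simp only [Xder, Pi.mul_apply, Pi.pow_apply]; rw [hf0 x hx, hDf0 x hx]; simp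
  -- integration by parts
  have hGC1 : ContDiff ℝ 1 G := by
    rw [hG_def]; exact ((contDiff_const.mul hφe1).mul hN1).mul hexp1
  have hGcs : HasCompactSupport G := by
    apply hsupp
    intro x hx
    simp only [hG_def]; rw [hN0 x hx]; ring
  have hIBP : ∫ x, fderiv ℝ G x e = 0 := integral_fderiv_apply_eq_zero hGC1 hGcs e
  have hEq : ∫ x, J2 x = ∫ x, I3 x := by
    have h0 : ∫ x, (J2 x - I3 x) = 0 := by
      rw [← hIBP]
      congr 1
      funext x
      rw [hGfd x]; simp only [hJ2_def, hI3_def]; ring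
    rw [integral_sub hJ2int hI3int, sub_eq_zero] at h0
    exact h0
  -- norm of Xder
  have habs : ∀ z : ℂ, ‖z‖^2 = z.re^2 + z.im^2 := fun z => by
    rw [Complex.sq_norm, Complex.normSq_apply]; ring
  have hX2 : ∀ x, ‖Xder η φ e f x‖^2
      = (du x - (1+η)/2*φe x*u x)^2 + (dw x - (1+η)/2*φe x*w x)^2 := by
    intro x
    rw [habs]
    simp only [Xder, Complex.sub_re, Complex.sub_im, Complex.mul_re, Complex.mul_im,
      Complex.ofReal_re, Complex.ofReal_im, hdu_def, hdw_def, hu_def, hw_def, hφe_def]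
    ring
  -- pointwise comparison
  have hpt : ∀ x, I1 x + (1+ε) * I3 x ≤ (2+ε+1/ε) * I4 x := by
    intro x
    have h1 := pointwise_ineq ε η (φe x) (u x) (w x) (du x) (dw x) hε
    have h2 := mul_le_mul_of_nonneg_right h1 (Real.exp_nonneg (-φ x))
    calc I1 x + (1+ε) * I3 x
        = (η^2*(φe x)^2*((u x)^2+(w x)^2)
            + (1+ε)*η*((φe x)^2*((u x)^2+(w x)^2) - φe x*(2*(u x*du x + w x*dw x))))
            * Real.exp (-φ x) := by
          simp only [hI1_def, hI3_def, hN_def]; ring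
      _ ≤ ((2+ε+1/ε) * ((du x - (1+η)/2*φe x*u x)^2 + (dw x - (1+η)/2*φe x*w x)^2))
            * Real.exp (-φ x) := h2
      _ = (2+ε+1/ε) * I4 x := by simp only [hI4_def]; rw [hX2 x]; ring
  -- main chain
  have split : ∫ x, (η^2 * (fderiv ℝ φ x e)^2 + (1+ε)*η* D2 φ x e) * ‖f x‖^2 * Real.exp (-φ x)
      = (∫ x, I1 x) + (1+ε) * ∫ x, J2 x := by
    have heq : (fun x => (η^2 * (fderiv ℝ φ x e)^2 + (1+ε)*η* D2 φ x e) * ‖f x‖^2 * Real.exp (-φ x))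
        = fun x => I1 x + (1+ε) * J2 x := by
      funext x
      rw [hNf x]; simp only [hI1_def, hJ2_def, hφe_def]; ring
    rw [heq, integral_add hI1int (hJ2int.const_mul _), integral_const_mul]
  calc ∫ x, (η^2 * (fderiv ℝ φ x e)^2 + (1+ε)*η* D2 φ x e) * ‖f x‖^2 * Real.exp (-φ x)
      = (∫ x, I1 x) + (1+ε) * ∫ x, I3 x := by rw [split, hEq]
    _ = ∫ x, (I1 x + (1+ε) * I3 x) := by
        rw [integral_add hI1int (hI3int.const_mul _), integral_const_mul]
    _ ≤ ∫ x, (2+ε+1/ε) * I4 x :=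
        integral_mono (hI1int.add (hI3int.const_mul _)) (hI4int.const_mul _) hpt
    _ = (2+ε+1/ε) * ∫ x, I4 x := integral_const_mul _ _


lemma term_integrable {m : ℕ} (η ε : ℝ)
    (φ : EuclideanSpace ℝ (Fin m) → ℝ) (hφ : ContDiff ℝ 2 φ)
    (f : EuclideanSpace ℝ (Fin m) → ℂ)
    (hf : ContDiff ℝ (⊤ : ℕ∞) f) (hcs : HasCompactSupport f)
    (e : EuclideanSpace ℝ (Fin m)) :
    Integrable (fun x => (η^2 * (fderiv ℝ φ x e)^2 + (1+ε)*η* D2 φ x e) * ‖f x‖^2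
      * Real.exp (-φ x)) := by
  have hφec : Continuous fun x => fderiv ℝ φ x e := by
    have h : ContDiff ℝ 0 fun x => fderiv ℝ φ x e :=
      (hφ.fderiv_right (m := 0) (by norm_num)).clm_apply contDiff_const
    exact h.continuous
  have hD2c : Continuous fun x => D2 φ x e := by
    have hφe1 : ContDiff ℝ 1 fun y => fderiv ℝ φ y e :=
      (hφ.fderiv_right (m := 1) (by norm_num)).clm_apply contDiff_const
    have h : ContDiff ℝ 0 fun x => fderiv ℝ (fun y => fderiv ℝ φ y e) x e :=
      (hφe1.fderiv_right (m := 0) le_rfl).clm_apply contDiff_const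
    exact h.continuous
  have hc : Continuous (fun x => (η^2 * (fderiv ℝ φ x e)^2 + (1+ε)*η* D2 φ x e) * ‖f x‖^2
      * Real.exp (-φ x)) :=
    (((continuous_const.mul (hφec.pow 2)).add (continuous_const.mul hD2c)).mul
      ((hf.continuous.norm).pow 2)).mul ((hφ.continuous.neg).rexp)
  apply hc.integrable_of_hasCompactSupport
  apply HasCompactSupport.intro hcs
  intro x hx
  rw [image_eq_zero_of_notMem_tsupport hx]
  simp


/-- For `Ψ = η²|∇φ|² + (1+ε)ηΔφ` and every test function `f`,
`∫ Ψ|f|²e^{-φ} ≤ (2 + ε + 1/ε) Σ_j (‖X_j f‖²_φ + ‖Y_j f‖²_φ)`. -/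
theorem psi_integral_le (n : ℕ) (η ε : ℝ) (hε : 0 < ε)
    (φ : EuclideanSpace ℝ (Fin (2 * n)) → ℝ) (hφ : ContDiff ℝ 2 φ)
    (f : EuclideanSpace ℝ (Fin (2 * n)) → ℂ)
    (hf : ContDiff ℝ (⊤ : ℕ∞) f) (hcs : HasCompactSupport f) :
    ∫ x, (η ^ 2 * gradSq φ x + (1 + ε) * η * lap φ x) * ‖f x‖ ^ 2 * Real.exp (-φ x)
      ≤ (2 + ε + 1 / ε) * ∑ j : Fin n,
          ((∫ x, ‖Xder η φ (exR j) f x‖ ^ 2 * Real.exp (-φ x))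
            + ∫ x, ‖Xder η φ (eyR j) f x‖ ^ 2 * Real.exp (-φ x)) := by
  have hterm := fun e => term_integrable η ε φ hφ f hf hcs e
  have hsum : (fun x => (η ^ 2 * gradSq φ x + (1 + ε) * η * lap φ x) * ‖f x‖ ^ 2
        * Real.exp (-φ x))
      = fun x => ∑ j : Fin n,
          ((η^2 * (fderiv ℝ φ x (exR j))^2 + (1+ε)*η* D2 φ x (exR j)) * ‖f x‖^2 * Real.exp (-φ x)
          + (η^2 * (fderiv ℝ φ x (eyR j))^2 + (1+ε)*η* D2 φ x (eyR j)) * ‖f x‖^2 * Real.exp (-φ x)) := by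
    funext x
    simp only [gradSq, lap, Finset.mul_sum, Finset.sum_mul, ← Finset.sum_add_distrib]
    apply Finset.sum_congr rfl
    intro j _
    ring
  rw [hsum, integral_finset_sum (s := Finset.univ)
      (f := fun (j : Fin n) x =>
        (η^2 * (fderiv ℝ φ x (exR j))^2 + (1+ε)*η* D2 φ x (exR j)) * ‖f x‖^2 * Real.exp (-φ x)
        + (η^2 * (fderiv ℝ φ x (eyR j))^2 + (1+ε)*η* D2 φ x (eyR j)) * ‖f x‖^2 * Real.exp (-φ x))
      (fun j _ => (hterm (exR j)).add (hterm (eyR j))),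
    Finset.mul_sum]
  apply Finset.sum_le_sum
  intro j _
  rw [integral_add (hterm (exR j)) (hterm (eyR j)), mul_add]
  exact add_le_add (key_dir η ε hε φ hφ f hf hcs (exR j)) (key_dir η ε hε φ hφ f hf hcs (eyR j))
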